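/- With X_k = Σ_{i=1}^k A_i, Y_k = Σ_{i=1}^k B_i, and T_K = Tr( Σ_{k=1}^K (A_k − B_k)[Y_k⁻¹ − X_k⁻¹] ), one has for all K ≥ 1: T_K ≥ (1/2) Σ_{i=1}^K Tr((A_i−B_i) Y_i⁻¹ (A_i−B_i) X_i⁻¹) + (1/2) Tr((X_K−Y_K) Y_K⁻¹ (X_K−Y_K) X_K⁻¹). -/

import Mathlib

open Matrix ComplexOrder

noncomputable def traceT (n : ℕ) (A B : ℕ → Matrix (Fin n) (Fin n) ℂ) (K : ℕ) : ℂ :=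
  Matrix.trace (∑ k ∈ Finset.Icc 1 K, (A k - B k) *
    ((∑ i ∈ Finset.Icc 1 k, B i)⁻¹ - (∑ i ∈ Finset.Icc 1 k, A i)⁻¹))

/-!
Write `X = X_K`, `Y = Y_K`, `X' = X_{K+1}`, `Y' = Y_{K+1}` and `D = A_{K+1} - B_{K+1}`.
Since `Y'⁻¹ (X' - Y') X'⁻¹ = Y'⁻¹ - X'⁻¹`, the cross terms in the expansion of
`Tr((X - Y) Y'⁻¹ (X - Y) X'⁻¹)` along `X - Y = (X' - Y') - D` are both equal to the increment
`Tr(D (Y'⁻¹ - X'⁻¹))` of `T_K`, so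
`Tr((X - Y) Y'⁻¹ (X - Y) X'⁻¹) = Tr((X' - Y') Y'⁻¹ (X' - Y') X'⁻¹) + Tr(D Y'⁻¹ D X'⁻¹) - 2 Tr(D (Y'⁻¹ - X'⁻¹))`.
Matrix inversion is antitone on positive definite matrices and `Tr(P Q) ≥ 0` for positive
semidefinite `P`, `Q`, so the left side is at most `Tr((X - Y) Y⁻¹ (X - Y) X⁻¹)`; this is the
induction step.
-/

namespace Matrix

section Algebra

variable {α ι : Type*} [CommRing α] [Fintype ι] [DecidableEq ι]

theorem trace_mul_inv_mul_sub_mul_inv {X Y : Matrix ι ι α} (h : IsUnit X ↔ IsUnit Y)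
    (G : Matrix ι ι α) : (G * Y⁻¹ * (X - Y) * X⁻¹).trace = (G * (Y⁻¹ - X⁻¹)).trace := by
  rw [inv_sub_inv h.symm, Matrix.mul_assoc, Matrix.mul_assoc, Matrix.mul_assoc]

theorem trace_sub_mul_inv_mul_mul_inv {X Y : Matrix ι ι α} (h : IsUnit X ↔ IsUnit Y)
    (G : Matrix ι ι α) : ((X - Y) * Y⁻¹ * G * X⁻¹).trace = (G * (Y⁻¹ - X⁻¹)).trace := by
  calc ((X - Y) * Y⁻¹ * G * X⁻¹).trace = (G * (X⁻¹ * (X - Y) * Y⁻¹)).trace := by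
        rw [Matrix.mul_assoc, trace_mul_comm]
        simp only [Matrix.mul_assoc]
    _ = (G * (Y⁻¹ - X⁻¹)).trace := by
        rw [← neg_sub X⁻¹, inv_sub_inv h, ← neg_sub Y X]
        simp only [Matrix.neg_mul, Matrix.mul_neg]

end Algebra

theorem posDef_sum_Icc_one {R ι : Type*} [CommRing R] [PartialOrder R] [StarRing R]
    [AddLeftMono R] {A : ℕ → Matrix ι ι R} {k : ℕ} (hk : 1 ≤ k) (h1 : (A 1).PosDef)
    (h : ∀ i, 2 ≤ i → i ≤ k → (A i).PosSemidef) : (∑ i ∈ Finset.Icc 1 k, A i).PosDef := by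
  rw [← Finset.add_sum_Ioc_eq_sum_Icc hk]
  refine h1.add_posSemidef (posSemidef_sum _ fun i hi => ?_)
  obtain ⟨hi1, hik⟩ := Finset.mem_Ioc.mp hi
  exact h i hi1 hik

variable {𝕜 ι : Type*} [RCLike 𝕜] [Fintype ι] [DecidableEq ι]

theorem PosSemidef.trace_mul_nonneg {P Q : Matrix ι ι 𝕜} (hP : P.PosSemidef)
    (hQ : Q.PosSemidef) : 0 ≤ (P * Q).trace := by
  open scoped MatrixOrder in
  obtain ⟨B, rfl⟩ := CStarAlgebra.nonneg_iff_eq_star_mul_self.mp hQ.nonneg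
  rw [← Matrix.mul_assoc, trace_mul_cycle]
  exact (hP.mul_mul_conjTranspose_same B).trace_nonneg

theorem trace_mul_mul_mul_mono {E P P' Q Q' : Matrix ι ι 𝕜} (hE : E.IsHermitian)
    (hP : P.PosSemidef) (hQ' : Q'.PosSemidef) (hPP' : (P' - P).PosSemidef)
    (hQQ' : (Q' - Q).PosSemidef) : (E * P * E * Q).trace ≤ (E * P' * E * Q').trace := by
  have conj {R : Matrix ι ι 𝕜} (hR : R.PosSemidef) : (E * R * E).PosSemidef := by
    simpa only [hE.eq] using hR.conjTranspose_mul_mul_same E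
  have split : E * P' * E * Q' - E * P * E * Q
      = E * (P' - P) * E * Q' + E * P * E * (Q' - Q) := by noncomm_ring
  rw [← sub_nonneg, ← trace_sub, split, trace_add]
  exact add_nonneg ((conj hPP').trace_mul_nonneg hQ') ((conj hP).trace_mul_nonneg hQQ')

theorem PosDef.posSemidef_inv_sub_inv_add {X C : Matrix ι ι 𝕜} (hX : X.PosDef)
    (hC : C.PosSemidef) : (X⁻¹ - (X + C)⁻¹).PosSemidef := by
  have hW := hX.add_posSemidef hC
  have hWdet : IsUnit (X + C).det := (isUnit_iff_isUnit_det _).mp hW.isUnit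
  have hXdet : IsUnit X.det := (isUnit_iff_isUnit_det _).mp hX.isUnit
  have key : X⁻¹ - (X + C)⁻¹ = (X + C)⁻¹ * (C + C * X⁻¹ * C) * (X + C)⁻¹ := by
    rw [inv_sub_inv (by simp [hX.isUnit, hW.isUnit]), add_sub_cancel_left,
      ← nonsing_inv_mul_cancel_left (A := X + C) (X⁻¹ * C * (X + C)⁻¹) hWdet]
    simp only [add_mul, Matrix.mul_assoc, mul_nonsing_inv_cancel_left _ _ hXdet]
  have hmid : (C + C * X⁻¹ * C).PosSemidef := by
    simpa only [hC.isHermitian.eq] using hC.add (hX.inv.posSemidef.conjTranspose_mul_mul_same C)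
  rw [key]
  simpa only [hW.inv.isHermitian.eq] using hmid.mul_mul_conjTranspose_same (X + C)⁻¹

end Matrix

section

variable {𝕜 ι : Type*} [RCLike 𝕜] [Fintype ι] [DecidableEq ι]

theorem trace_lower_bound_step {X Y C D : Matrix ι ι 𝕜} (hX : X.PosDef) (hY : Y.PosDef)
    (hC : C.PosSemidef) (hD : D.PosSemidef) :
    (1 / 2 : 𝕜) * ((C - D) * (Y + D)⁻¹ * (C - D) * (X + C)⁻¹).trace +
        (1 / 2 : 𝕜) * ((X + C - (Y + D)) * (Y + D)⁻¹ * (X + C - (Y + D)) * (X + C)⁻¹).trace ≤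
      (1 / 2 : 𝕜) * ((X - Y) * Y⁻¹ * (X - Y) * X⁻¹).trace +
        ((C - D) * ((Y + D)⁻¹ - (X + C)⁻¹)).trace := by
  set X' := X + C
  set Y' := Y + D
  have hunit : IsUnit X' ↔ IsUnit Y' :=
    iff_of_true (hX.add_posSemidef hC).isUnit (hY.add_posSemidef hD).isUnit
  have expand : ((X - Y) * Y'⁻¹ * (X - Y) * X'⁻¹).trace =
      ((X' - Y') * Y'⁻¹ * (X' - Y') * X'⁻¹).trace + ((C - D) * Y'⁻¹ * (C - D) * X'⁻¹).trace -
        2 * ((C - D) * (Y'⁻¹ - X'⁻¹)).trace := by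
    have hXY : X - Y = (X' - Y') - (C - D) := by simp only [X', Y']; abel
    have split : (X' - Y' - (C - D)) * Y'⁻¹ * (X' - Y' - (C - D)) * X'⁻¹ =
        (X' - Y') * Y'⁻¹ * (X' - Y') * X'⁻¹ + (C - D) * Y'⁻¹ * (C - D) * X'⁻¹ -
          (X' - Y') * Y'⁻¹ * (C - D) * X'⁻¹ - (C - D) * Y'⁻¹ * (X' - Y') * X'⁻¹ := by
      noncomm_ring
    rw [hXY, split, trace_sub, trace_sub, trace_add, trace_sub_mul_inv_mul_mul_inv hunit (C - D),
      trace_mul_inv_mul_sub_mul_inv hunit (C - D)]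
    ring
  have mono : ((X - Y) * Y'⁻¹ * (X - Y) * X'⁻¹).trace ≤ ((X - Y) * Y⁻¹ * (X - Y) * X⁻¹).trace :=
    trace_mul_mul_mul_mono (hX.isHermitian.sub hY.isHermitian)
      (hY.add_posSemidef hD).inv.posSemidef hX.inv.posSemidef
      (hY.posSemidef_inv_sub_inv_add hD) (hX.posSemidef_inv_sub_inv_add hC)
  rw [expand, ← sub_nonneg] at mono
  rw [← sub_nonneg]
  convert mul_nonneg one_half_pos.le mono using 1
  ring

end

theorem trace_lower_bound (n : ℕ) (K : ℕ) (hK : 1 ≤ K)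
    (A B : ℕ → Matrix (Fin n) (Fin n) ℂ)
    (hA1 : (A 1).PosDef) (hB1 : (B 1).PosDef)
    (hA : ∀ k, 2 ≤ k → k ≤ K → (A k).PosSemidef)
    (hB : ∀ k, 2 ≤ k → k ≤ K → (B k).PosSemidef) :
    (1 / 2 : ℂ) * ∑ i ∈ Finset.Icc 1 K,
        Matrix.trace ((A i - B i) * (∑ j ∈ Finset.Icc 1 i, B j)⁻¹ *
          (A i - B i) * (∑ j ∈ Finset.Icc 1 i, A j)⁻¹) +
      (1 / 2 : ℂ) *
        Matrix.trace (((∑ j ∈ Finset.Icc 1 K, A j) - (∑ j ∈ Finset.Icc 1 K, B j)) *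
          (∑ j ∈ Finset.Icc 1 K, B j)⁻¹ *
          ((∑ j ∈ Finset.Icc 1 K, A j) - (∑ j ∈ Finset.Icc 1 K, B j)) *
          (∑ j ∈ Finset.Icc 1 K, A j)⁻¹) ≤
      traceT n A B K := by
  induction K, hK using Nat.le_induction with
  | base =>
    simp only [traceT, Finset.Icc_self, Finset.sum_singleton]
    rw [← trace_mul_inv_mul_sub_mul_inv (iff_of_true hA1.isUnit hB1.isUnit)]
    exact le_of_eq (by ring)
  | succ K hK ih =>
    have hA' k (h2 : 2 ≤ k) (hk : k ≤ K) := hA k h2 (by omega)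
    have hB' k (h2 : 2 ≤ k) (hk : k ≤ K) := hB k h2 (by omega)
    have step := trace_lower_bound_step (posDef_sum_Icc_one hK hA1 hA')
      (posDef_sum_Icc_one hK hB1 hB') (hA (K + 1) (by omega) le_rfl) (hB (K + 1) (by omega) le_rfl)
    simp only [traceT, Finset.sum_Icc_succ_top (Nat.le_succ_of_le hK), trace_add, mul_add]
    rw [add_assoc]
    refine (add_le_add le_rfl step).trans ?_
    rw [← add_assoc]
    exact add_le_add (ih hA' hB') le_rfl
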